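/- Assume 0 < θ < 1. Let q ∈ ℝ^p be a unit vector with grad f(q) = 0, and suppose ζ = Aᵀq satisfies, for some index i, ζ_i² = α(q) > 0 and ζ_j = 0 for all j ≠ i. Then q = a_i or q = −a_i, and for every v ∈ ℝ^p one has vᵀ Hess f(q) v ≥ (1−θ)·‖(I_p − qqᵀ)v‖₂². -/

import Mathlib

open Matrix MeasureTheory ProbabilityTheory Real
open scoped BigOperators ENNReal

noncomputable section

/-- squared Euclidean norm -/
def l2sq {m : ℕ} (v : Fin m → ℝ) : ℝ := ∑ i, v i ^ 2

/-- fourth power of the ℓ₄ norm -/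
def l4p4 {m : ℕ} (v : Fin m → ℝ) : ℝ := ∑ i, v i ^ 4

/-- Euclidean norm -/
def l2norm {m : ℕ} (v : Fin m → ℝ) : ℝ := Real.sqrt (l2sq v)

/-- squared sup-norm -/
def linfSq {m : ℕ} (v : Fin m → ℝ) : ℝ := ⨆ i, (v i) ^ 2

/-- projection onto the orthogonal complement of q -/
def proj {p : ℕ} (q : Fin p → ℝ) : Matrix (Fin p) (Fin p) ℝ := 1 - Matrix.vecMulVec q q

def zeta {p r : ℕ} (A : Matrix (Fin p) (Fin r) ℝ) (q : Fin p → ℝ) : Fin r → ℝ := Aᵀ *ᵥ q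

/-- population objective -/
def fpop {p r : ℕ} (θ : ℝ) (A : Matrix (Fin p) (Fin r) ℝ) (q : Fin p → ℝ) : ℝ :=
  -(1/4) * ((1 - θ) * l4p4 (zeta A q) + θ * (l2sq (zeta A q)) ^ 2)

/-- Riemannian gradient of the population objective -/
def gradf {p r : ℕ} (θ : ℝ) (A : Matrix (Fin p) (Fin r) ℝ) (q : Fin p → ℝ) : Fin p → ℝ :=
  -((proj q) *ᵥ ((1 - θ) • (A *ᵥ fun j => (zeta A q j) ^ 3)
      + (θ * l2sq (zeta A q)) • (A *ᵥ zeta A q)))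

/-- Riemannian Hessian of the population objective -/
def hessf {p r : ℕ} (θ : ℝ) (A : Matrix (Fin p) (Fin r) ℝ) (q : Fin p → ℝ) :
    Matrix (Fin p) (Fin p) ℝ :=
  -((1 - θ) • (proj q *
      ((3 : ℝ) • (A * Matrix.diagonal (fun j => (zeta A q j) ^ 2) * Aᵀ)
        - l4p4 (zeta A q) • (1 : Matrix (Fin p) (Fin p) ℝ)) * proj q))
  - θ • (proj q *
      (l2sq (zeta A q) • (A * Aᵀ)
        + (2 : ℝ) • (A * Aᵀ * Matrix.vecMulVec q q * (A * Aᵀ))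
        - (l2sq (zeta A q)) ^ 2 • (1 : Matrix (Fin p) (Fin p) ℝ)) * proj q)

/-- quadratic form -/
def qform {p : ℕ} (M : Matrix (Fin p) (Fin p) ℝ) (v : Fin p → ℝ) : ℝ := v ⬝ᵥ (M *ᵥ v)

/-- α(q) -/
def alphaf {p r : ℕ} (θ : ℝ) (A : Matrix (Fin p) (Fin r) ℝ) (q : Fin p → ℝ) : ℝ :=
  l4p4 (zeta A q) + (θ / (1 - θ)) * ((l2sq (zeta A q)) ^ 2 - l2sq (zeta A q))

/-- columns of X -/
def colX {r n : ℕ} (X : Matrix (Fin r) (Fin n) ℝ) (k : Fin n) : Fin r → ℝ := fun i => X i k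

/-- finite-sample objective -/
def Ffun {p r n : ℕ} (θ σ : ℝ) (A : Matrix (Fin p) (Fin r) ℝ) (X : Matrix (Fin r) (Fin n) ℝ)
    (q : Fin p → ℝ) : ℝ :=
  -(1 / (12 * θ * σ ^ 4 * n)) * ∑ k : Fin n, (q ⬝ᵥ (A *ᵥ colX X k)) ^ 4

/-- Riemannian gradient of the finite-sample objective -/
def gradF {p r n : ℕ} (θ σ : ℝ) (A : Matrix (Fin p) (Fin r) ℝ) (X : Matrix (Fin r) (Fin n) ℝ)
    (q : Fin p → ℝ) : Fin p → ℝ :=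
  (-(1 / (3 * θ * σ ^ 4 * n))) •
    ((proj q) *ᵥ ∑ k : Fin n, ((q ⬝ᵥ (A *ᵥ colX X k)) ^ 3) • (A *ᵥ colX X k))

/-- Riemannian Hessian of the finite-sample objective -/
def hessF {p r n : ℕ} (θ σ : ℝ) (A : Matrix (Fin p) (Fin r) ℝ) (X : Matrix (Fin r) (Fin n) ℝ)
    (q : Fin p → ℝ) : Matrix (Fin p) (Fin p) ℝ :=
  (-(1 / (3 * θ * σ ^ 4 * n))) •
    ∑ k : Fin n, proj q *
      ((3 * (q ⬝ᵥ (A *ᵥ colX X k)) ^ 2) • Matrix.vecMulVec (A *ᵥ colX X k) (A *ᵥ colX X k)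
        - ((q ⬝ᵥ (A *ᵥ colX X k)) ^ 4) • (1 : Matrix (Fin p) (Fin p) ℝ)) * proj q

/-- spectral norm of a rectangular matrix -/
def opNorm {m n : ℕ} (M : Matrix (Fin m) (Fin n) ℝ) : ℝ :=
  ‖LinearMap.toContinuousLinearMap (Matrix.toEuclideanLin M)‖

/-- Bernoulli(θ) law on ℝ -/
def bernoulliReal (θ : ℝ) : Measure ℝ :=
  ENNReal.ofReal θ • Measure.dirac (1 : ℝ) + ENNReal.ofReal (1 - θ) • Measure.dirac (0 : ℝ)

/-- Bernoulli–Gaussian law BG(θ, σ²) on ℝ -/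
def bgLaw (θ σ2 : ℝ) : Measure ℝ :=
  ((bernoulliReal θ).prod (gaussianReal 0 σ2.toNNReal)).map fun p => p.1 * p.2

/-- law of a random vector in ℝ^r with i.i.d. BG(θ, σ²) entries -/
def bgVec (r : ℕ) (θ σ2 : ℝ) : Measure (Fin r → ℝ) :=
  Measure.pi fun _ : Fin r => bgLaw θ σ2

/-- law of a random r×n matrix with i.i.d. BG(θ, σ²) entries -/
def bgMatrix (r n : ℕ) (θ σ2 : ℝ) : Measure (Fin r → Fin n → ℝ) :=
  Measure.pi fun _ : Fin r => Measure.pi fun _ : Fin n => bgLaw θ σ2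

/-!
Because ζ = Aᵀq is supported on {i}, we have ‖ζ‖₂² = c² and ‖ζ‖₄⁴ = c⁴ with c = ζ_i, and the
equation c² = α(q) collapses to c² = c⁴, so c² = 1. The gradient then reduces to −c³ P a_i, whose
vanishing gives a_i = (qᵀa_i) q = c q, i.e. q = c a_i = ±a_i. At such a point every tangent vector
w = Pv is orthogonal to a_i, hence (Aᵀw)_i = 0: the cubic and rank-one parts of the Hessian vanish
on w, and what remains is (1 − θ)‖w‖² + θ(‖w‖² − ‖Aᵀw‖²), where the last bracket is nonnegative by
Bessel's inequality for the orthonormal columns of A.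
-/

lemma l2sq_eq_dotProduct {m : ℕ} (v : Fin m → ℝ) : l2sq v = v ⬝ᵥ v := by
  simp [l2sq, dotProduct, sq]

lemma l2sq_single {m : ℕ} (i : Fin m) (c : ℝ) : l2sq (Pi.single i c) = c ^ 2 := by
  rw [l2sq_eq_dotProduct, dotProduct_single, Pi.single_eq_same, sq]

lemma l4p4_single {m : ℕ} (i : Fin m) (c : ℝ) : l4p4 (Pi.single i c) = c ^ 4 := by
  rw [l4p4, Finset.sum_eq_single i (fun j _ hj => by simp [Pi.single_eq_of_ne hj])
    (by simp), Pi.single_eq_same]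

lemma eq_single_of_forall_ne_eq_zero {ι R : Type*} [DecidableEq ι] [Zero R] {x : ι → R} {i : ι}
    (hx : ∀ j, j ≠ i → x j = 0) : x = Pi.single i (x i) := by
  ext j
  by_cases hj : j = i
  · subst hj; simp
  · simp [hx j hj, Pi.single_eq_of_ne hj]

section QuadraticForm

variable {p : ℕ} (M N : Matrix (Fin p) (Fin p) ℝ) (v : Fin p → ℝ)

lemma qform_add : qform (M + N) v = qform M v + qform N v := by
  rw [qform, add_mulVec, dotProduct_add, qform, qform]

lemma qform_sub : qform (M - N) v = qform M v - qform N v := by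
  rw [qform, sub_mulVec, dotProduct_sub, qform, qform]

lemma qform_neg : qform (-M) v = -qform M v := by
  rw [qform, neg_mulVec, dotProduct_neg, qform]

lemma qform_smul (a : ℝ) : qform (a • M) v = a * qform M v := by
  rw [qform, smul_mulVec, dotProduct_smul, smul_eq_mul, qform]

lemma qform_one : qform 1 v = l2sq v := by
  rw [qform, one_mulVec, l2sq_eq_dotProduct]

end QuadraticForm

section Projection

variable {p : ℕ} (q : Fin p → ℝ)

lemma proj_mulVec (a : Fin p → ℝ) : proj q *ᵥ a = a - (q ⬝ᵥ a) • q := by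
  simp [proj, sub_mulVec, vecMulVec_mulVec]

lemma proj_transpose : (proj q)ᵀ = proj q := by
  simp [proj, transpose_sub, transpose_vecMulVec]

lemma dotProduct_proj_mulVec {q} (hq : q ⬝ᵥ q = 1) (v : Fin p → ℝ) : q ⬝ᵥ (proj q *ᵥ v) = 0 := by
  rw [proj_mulVec, dotProduct_sub, dotProduct_smul, hq, smul_eq_mul, mul_one, sub_self]

lemma qform_proj_mul_mul_proj (M : Matrix (Fin p) (Fin p) ℝ) (v : Fin p → ℝ) :
    qform (proj q * M * proj q) v = qform M (proj q *ᵥ v) := by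
  rw [qform, qform, ← mulVec_mulVec, ← mulVec_mulVec, dotProduct_mulVec, ← mulVec_transpose,
    proj_transpose]

end Projection

lemma dotProduct_self_transpose_mulVec_le {m n : Type*} [Fintype m] [Fintype n] [DecidableEq n]
    {A : Matrix m n ℝ} (hA : Aᵀ * A = 1) (w : m → ℝ) :
    (Aᵀ *ᵥ w) ⬝ᵥ (Aᵀ *ᵥ w) ≤ w ⬝ᵥ w := by
  set u := Aᵀ *ᵥ w
  have hwu : w ⬝ᵥ (A *ᵥ u) = u ⬝ᵥ u := by rw [dotProduct_mulVec, ← mulVec_transpose]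
  have huu : (A *ᵥ u) ⬝ᵥ (A *ᵥ u) = u ⬝ᵥ u := by
    rw [dotProduct_mulVec, ← mulVec_transpose, mulVec_mulVec, hA, one_mulVec]
  have := dotProduct_self_star_nonneg (w - A *ᵥ u)
  simp only [star_trivial, dotProduct_sub, sub_dotProduct, dotProduct_comm (A *ᵥ u) w, hwu,
    huu] at this
  linarith

section Zeta

variable {p r : ℕ} {A : Matrix (Fin p) (Fin r) ℝ}

lemma zeta_apply (q : Fin p → ℝ) (j : Fin r) : zeta A q j = q ⬝ᵥ A.col j := by
  rw [zeta, mulVec_transpose]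
  rfl

lemma dotProduct_mul_transpose_mulVec (x y : Fin p → ℝ) :
    x ⬝ᵥ ((A * Aᵀ) *ᵥ y) = zeta A x ⬝ᵥ zeta A y := by
  rw [← mulVec_mulVec, dotProduct_mulVec, ← mulVec_transpose, zeta, zeta]

lemma zeta_smul_col (hA : Aᵀ * A = 1) (i : Fin r) (c : ℝ) :
    zeta A (c • A.col i) = Pi.single i c := by
  rw [zeta, ← mulVec_single_one, mulVec_smul, mulVec_mulVec, hA, one_mulVec, ← Pi.single_smul,
    smul_eq_mul, mul_one]

lemma qform_mul_diagonal_mul_transpose (d : Fin r → ℝ) (w : Fin p → ℝ) :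
    qform (A * diagonal d * Aᵀ) w = ∑ j, d j * zeta A w j ^ 2 := by
  rw [qform, ← mulVec_mulVec, ← mulVec_mulVec, dotProduct_mulVec, ← mulVec_transpose]
  simp [zeta, dotProduct, mulVec_diagonal, sq, mul_left_comm]

lemma qform_mul_transpose (w : Fin p → ℝ) : qform (A * Aᵀ) w = l2sq (zeta A w) := by
  rw [qform, dotProduct_mul_transpose_mulVec, l2sq_eq_dotProduct]

lemma qform_mul_transpose_vecMulVec (q w : Fin p → ℝ) :
    qform (A * Aᵀ * vecMulVec q q * (A * Aᵀ)) w = (zeta A q ⬝ᵥ zeta A w) ^ 2 := by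
  rw [qform, ← mulVec_mulVec, ← mulVec_mulVec, vecMulVec_mulVec, op_smul_eq_smul, mulVec_smul,
    dotProduct_smul, smul_eq_mul, dotProduct_mul_transpose_mulVec, dotProduct_mul_transpose_mulVec,
    dotProduct_comm (zeta A w), sq]

lemma qform_hessf (θ : ℝ) (q v : Fin p → ℝ) :
    qform (hessf θ A q) v =
      (1 - θ) * (l4p4 (zeta A q) * l2sq (proj q *ᵥ v)
          - 3 * ∑ j, zeta A q j ^ 2 * zeta A (proj q *ᵥ v) j ^ 2)
      + θ * (l2sq (zeta A q) ^ 2 * l2sq (proj q *ᵥ v)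
          - l2sq (zeta A q) * l2sq (zeta A (proj q *ᵥ v))
          - 2 * (zeta A q ⬝ᵥ zeta A (proj q *ᵥ v)) ^ 2) := by
  simp only [hessf, qform_neg, qform_sub, qform_add, qform_smul, qform_proj_mul_mul_proj, qform_one,
    qform_mul_diagonal_mul_transpose, qform_mul_transpose, qform_mul_transpose_vecMulVec]
  ring

end Zeta

section CriticalPoint

variable {p r : ℕ} {A : Matrix (Fin p) (Fin r) ℝ} {θ c : ℝ} {q : Fin p → ℝ} {i : Fin r}

lemma sq_eq_one_of_sq_eq_alphaf (hθ : θ < 1) (hζ : zeta A q = Pi.single i c)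
    (hc : c ^ 2 = alphaf θ A q) (hpos : 0 < alphaf θ A q) : c ^ 2 = 1 := by
  have hc0 : 0 < c ^ 2 := hc ▸ hpos
  rw [alphaf, hζ, l2sq_single, l4p4_single] at hc
  have h1θ : 1 - θ ≠ 0 := sub_ne_zero.mpr hθ.ne'
  have hc4 : c ^ 2 * (c ^ 2 - 1) = 0 := by
    field_simp at hc
    linear_combination -hc
  exact sub_eq_zero.mp ((mul_eq_zero.mp hc4).resolve_left hc0.ne')

lemma gradf_of_zeta_eq_single (hζ : zeta A q = Pi.single i c) :
    gradf θ A q = -(c ^ 3 • (proj q *ᵥ A.col i)) := by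
  have hcube : (fun j => zeta A q j ^ 3) = Pi.single i (c ^ 3) := by
    rw [hζ]
    ext j
    exact Pi.apply_single (fun _ (x : ℝ) => x ^ 3) (fun _ => zero_pow three_ne_zero) i c j
  rw [gradf, hcube, hζ, l2sq_single, mulVec_single, mulVec_single, ← mulVec_smul]
  simp only [op_smul_eq_smul, smul_smul, ← add_smul]
  congr 3
  ring

lemma col_eq_smul_of_gradf_eq_zero (hζ : zeta A q = Pi.single i c) (hc : c ≠ 0)
    (hgrad : gradf θ A q = 0) : A.col i = c • q := by
  rw [gradf_of_zeta_eq_single hζ, neg_eq_zero, smul_eq_zero, proj_mulVec, sub_eq_zero,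
    ← zeta_apply, hζ, Pi.single_eq_same] at hgrad
  exact hgrad.resolve_left (pow_ne_zero 3 hc)

lemma one_sub_mul_l2sq_le_qform_hessf (hA : Aᵀ * A = 1) (hθ : 0 ≤ θ) (hc : c ^ 2 = 1)
    (v : Fin p → ℝ) :
    (1 - θ) * l2sq (proj (c • A.col i) *ᵥ v) ≤ qform (hessf θ A (c • A.col i)) v := by
  set q := c • A.col i
  set w := proj q *ᵥ v
  have hζ : zeta A q = Pi.single i c := zeta_smul_col hA i c
  have hcol : A.col i = c • q := by rw [smul_smul, ← sq, hc, one_smul]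
  have hq : q ⬝ᵥ q = 1 := by
    change q ⬝ᵥ (c • A.col i) = 1
    rw [dotProduct_smul, ← zeta_apply, hζ, Pi.single_eq_same, smul_eq_mul, ← sq, hc]
  have hζw : zeta A w i = 0 := by
    rw [zeta_apply, dotProduct_comm, hcol, smul_dotProduct, dotProduct_proj_mulVec hq, smul_zero]
  have hsum : ∑ j, zeta A q j ^ 2 * zeta A w j ^ 2 = 0 := by
    rw [hζ, Fintype.sum_eq_single i fun j hj => by simp [Pi.single_eq_of_ne hj], hζw]
    ring
  have hdot : zeta A q ⬝ᵥ zeta A w = 0 := by rw [hζ, single_dotProduct, hζw, mul_zero]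
  have hbessel : l2sq (zeta A w) ≤ l2sq w := by
    rw [l2sq_eq_dotProduct, l2sq_eq_dotProduct]
    exact dotProduct_self_transpose_mulVec_le hA w
  have hc4 : c ^ 4 = 1 := by rw [show c ^ 4 = (c ^ 2) ^ 2 by ring, hc, one_pow]
  rw [qform_hessf, hsum, hdot, hζ, l2sq_single, l4p4_single, hc, hc4]
  nlinarith [mul_nonneg hθ (sub_nonneg.mpr hbessel)]

end CriticalPoint

theorem stmt6_general (p r : ℕ)
    (A : Matrix (Fin p) (Fin r) ℝ) (hA : Aᵀ * A = 1)
    (θ : ℝ) (hθ0 : 0 < θ) (hθ : θ < 1)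
    (q : Fin p → ℝ)
    (hgrad : gradf θ A q = 0)
    (i : Fin r) (hi : (zeta A q i) ^ 2 = alphaf θ A q) (hpos : 0 < alphaf θ A q)
    (hj : ∀ j : Fin r, j ≠ i → zeta A q j = 0) :
    (q = (fun k => A k i) ∨ q = (fun k => -A k i)) ∧
    (∀ v : Fin p → ℝ, (1 - θ) * l2sq ((proj q) *ᵥ v) ≤ qform (hessf θ A q) v) := by
  have hζ := eq_single_of_forall_ne_eq_zero hj
  generalize zeta A q i = c at hζ hi
  have hc : c ^ 2 = 1 := sq_eq_one_of_sq_eq_alphaf hθ hζ hi hpos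
  have hcol := col_eq_smul_of_gradf_eq_zero hζ (by rintro rfl; simp at hc) hgrad
  have hq : q = c • A.col i := by rw [hcol, smul_smul, ← sq, hc, one_smul]
  refine ⟨?_, fun v => hq ▸ one_sub_mul_l2sq_le_qform_hessf hA hθ0.le hc v⟩
  rcases sq_eq_one_iff.mp hc with rfl | rfl
  · exact Or.inl (by rw [hq, one_smul]; rfl)
  · exact Or.inr (by rw [hq, neg_one_smul]; rfl)

theorem stmt6 (p r : ℕ) (hr : 1 ≤ r) (hrp : r ≤ p)
    (A : Matrix (Fin p) (Fin r) ℝ) (hA : Aᵀ * A = 1)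
    (θ : ℝ) (hθ0 : 0 < θ) (hθ : θ < 1)
    (q : Fin p → ℝ) (hq : l2sq q = 1)
    (hgrad : gradf θ A q = 0)
    (i : Fin r) (hi : (zeta A q i) ^ 2 = alphaf θ A q) (hpos : 0 < alphaf θ A q)
    (hj : ∀ j : Fin r, j ≠ i → zeta A q j = 0) :
    (q = (fun k => A k i) ∨ q = (fun k => -A k i)) ∧
    (∀ v : Fin p → ℝ, (1 - θ) * l2sq ((proj q) *ᵥ v) ≤ qform (hessf θ A q) v) :=
  stmt6_general p r A hA θ hθ0 hθ q hgrad i hi hpos hj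

end
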